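/- (Intermediate-regime minimizer.) Let λ = √(2/(3π)) and let ρ*(x) = 3π·max(λ − x, 0) for x > 0. Then for every measurable, nonnegative, square-integrable ρ : (0,∞) → ℝ with ∫₀^∞ ρ(x) dx = 1, one has (1/(6π))·∫₀^∞ ρ(x)² dx + ∫₀^∞ x·ρ(x) dx ≥ (1/(6π))·∫₀^∞ ρ*(x)² dx + ∫₀^∞ x·ρ*(x) dx, with equality if and only if ρ = ρ* almost everywhere. In particular the equilibrium density in the intermediate regime is linear on its support. -/

import Mathlib

/-!
Expanding the energy around `ρ*` gives, pointwise,
`c r² + x r = c ρ*² + x ρ* + c (r - ρ*)² + (2 c ρ* + x) (r - ρ*)` with `c = 1/(6π)`.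
The first variation `2 c ρ* + x` equals `λ` on `[0, λ]`, while beyond `λ` it is `x ≥ λ` and
`ρ* = 0 ≤ r`; hence the linear term is at least `λ (r - ρ*)`, whose integral vanishes because
`ρ` and `ρ*` have the same mass. So `E(ρ) ≥ E(ρ*) + c ‖ρ - ρ*‖²`. Adding `λ ∫ ρ` to both sides
instead of subtracting `λ ∫ ρ*` keeps every term nonnegative, so the inequality can be integrated
in `[0, ∞]` even when `E(ρ) = ∞`.
-/

open Real MeasureTheory

/-- `λ = √(2/(3π))`, the pile-up length of the intermediate-regime minimizer. -/
noncomputable def lam : ℝ := Real.sqrt (2 / (3 * Real.pi))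

/-- The intermediate-regime equilibrium density `ρ*(x) = 3π·max(λ − x, 0)`. -/
noncomputable def rhoStar (x : ℝ) : ℝ := 3 * Real.pi * max (lam - x) 0

open Set
open scoped ENNReal

lemma lam_pos : 0 < lam := Real.sqrt_pos.mpr (by positivity)

lemma lam_sq : lam ^ 2 = 2 / (3 * π) := Real.sq_sqrt (by positivity)

lemma continuous_rhoStar : Continuous rhoStar := by
  unfold rhoStar; fun_prop

lemma rhoStar_nonneg (x : ℝ) : 0 ≤ rhoStar x :=
  mul_nonneg (by positivity) (le_max_right _ _)

lemma rhoStar_eq_zero_of_le {x : ℝ} (hx : lam ≤ x) : rhoStar x = 0 := by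
  simp [rhoStar, hx]

lemma two_mul_mul_rhoStar (x : ℝ) : 2 * (1 / (6 * π)) * rhoStar x = max (lam - x) 0 := by
  unfold rhoStar; field_simp; ring

lemma pointwise_energy_gap {c a x r s : ℝ} (hc : 0 < c) (hr : 0 ≤ r)
    (hs : 2 * c * s = max (a - x) 0) :
    c * s ^ 2 + x * s + c * (r - s) ^ 2 + a * r ≤ c * r ^ 2 + x * r + a * s := by
  have first_variation : 0 ≤ (2 * c * s + x - a) * (r - s) := by
    rcases le_total x a with hxa | hax
    · rw [max_eq_left (by linarith)] at hs
      simp [hs]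
    · rw [max_eq_right (by linarith)] at hs
      obtain rfl : s = 0 := by simpa [hc.ne'] using hs
      nlinarith
  nlinarith [first_variation]

lemma Continuous.integrableOn_Ioi_of_forall_ge_eq_zero {f : ℝ → ℝ} {a b : ℝ} (hf : Continuous f)
    (hb : ∀ x, b ≤ x → f x = 0) : IntegrableOn f (Ioi a) :=
  hf.integrableOn_Ioc.of_forall_sdiff_eq_zero measurableSet_Ioi
    fun x hx => hb x (not_lt.mp fun hxb => hx.2 ⟨hx.1, hxb.le⟩)

lemma integral_rhoStar : ∫ x in Ioi 0, rhoStar x = 1 := by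
  have on_support : ∀ x ∈ Ioc 0 lam, rhoStar x = 3 * π * (lam - x) := fun x hx => by
    simp [rhoStar, hx.2]
  rw [setIntegral_eq_of_subset_of_forall_sdiff_eq_zero measurableSet_Ioi Ioc_subset_Ioi_self
      fun x hx => rhoStar_eq_zero_of_le (not_lt.mp fun h => hx.2 ⟨hx.1, h.le⟩),
    setIntegral_congr_fun measurableSet_Ioc on_support,
    ← intervalIntegral.integral_of_le lam_pos.le, intervalIntegral.integral_const_mul,
    intervalIntegral.integral_comp_sub_left fun x => x]
  simp only [sub_self, sub_zero, integral_id]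
  rw [lam_sq]
  field_simp
  norm_num

noncomputable def energy (ρ : ℝ → ℝ) : ℝ≥0∞ :=
  ENNReal.ofReal (1 / (6 * π)) * (∫⁻ x in Ioi 0, ENNReal.ofReal (ρ x ^ 2)) +
    ∫⁻ x in Ioi 0, ENNReal.ofReal (x * ρ x)

lemma ofReal_pointwise_energy_gap {x r : ℝ} (hx : 0 ≤ x) (hr : 0 ≤ r) :
    ENNReal.ofReal (1 / (6 * π)) * ENNReal.ofReal (rhoStar x ^ 2) +
        ENNReal.ofReal (x * rhoStar x) +
        ENNReal.ofReal (1 / (6 * π)) * ENNReal.ofReal ((r - rhoStar x) ^ 2) +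
        ENNReal.ofReal lam * ENNReal.ofReal r ≤
      ENNReal.ofReal (1 / (6 * π)) * ENNReal.ofReal (r ^ 2) + ENNReal.ofReal (x * r) +
        ENNReal.ofReal lam * ENNReal.ofReal (rhoStar x) := by
  have := rhoStar_nonneg x
  have := lam_pos
  simp (disch := positivity) only [← ENNReal.ofReal_mul, ← ENNReal.ofReal_add]
  exact ENNReal.ofReal_le_ofReal
    (pointwise_energy_gap (by positivity) hr (two_mul_mul_rhoStar x))

lemma energy_add_le {ρ : ℝ → ℝ} (hρ : AEMeasurable ρ (volume.restrict (Ioi 0)))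
    (hnn : ∀ x ∈ Ioi (0 : ℝ), 0 ≤ ρ x) :
    energy rhoStar +
        ENNReal.ofReal (1 / (6 * π)) * (∫⁻ x in Ioi 0, ENNReal.ofReal ((ρ x - rhoStar x) ^ 2)) +
        ENNReal.ofReal lam * (∫⁻ x in Ioi 0, ENNReal.ofReal (ρ x)) ≤
      energy ρ + ENNReal.ofReal lam * ∫⁻ x in Ioi 0, ENNReal.ofReal (rhoStar x) := by
  have hmono := setLIntegral_mono' (μ := volume) measurableSet_Ioi
    fun x hx => ofReal_pointwise_energy_gap (le_of_lt hx) (hnn x hx)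
  have := continuous_rhoStar.measurable
  rw [lintegral_add_right' _ (by fun_prop), lintegral_add_right' _ (by fun_prop),
    lintegral_add_right' _ (by fun_prop), lintegral_add_right' _ (by fun_prop),
    lintegral_add_right' _ (by fun_prop)] at hmono
  simpa only [energy, lintegral_const_mul' _ _ ENNReal.ofReal_ne_top] using hmono

lemma energy_rhoStar_ne_top : energy rhoStar ≠ ∞ := by
  have hsq : IntegrableOn (fun x => rhoStar x ^ 2) (Ioi 0) :=
    (continuous_rhoStar.pow 2).integrableOn_Ioi_of_forall_ge_eq_zero (b := lam)
      fun x hx => by simp [rhoStar_eq_zero_of_le hx]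
  have hmoment : IntegrableOn (fun x => x * rhoStar x) (Ioi 0) :=
    (continuous_id.mul continuous_rhoStar).integrableOn_Ioi_of_forall_ge_eq_zero (b := lam)
      fun x hx => by simp [rhoStar_eq_zero_of_le hx]
  exact ENNReal.add_ne_top.mpr
    ⟨ENNReal.mul_ne_top ENNReal.ofReal_ne_top hsq.lintegral_lt_top.ne,
      hmoment.lintegral_lt_top.ne⟩

lemma lintegral_ofReal_rhoStar : ∫⁻ x in Ioi 0, ENNReal.ofReal (rhoStar x) = 1 := by
  rw [← ofReal_integral_eq_lintegral_ofReal
      (continuous_rhoStar.integrableOn_Ioi_of_forall_ge_eq_zero fun _ => rhoStar_eq_zero_of_le)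
      (ae_of_all _ rhoStar_nonneg),
    integral_rhoStar, ENNReal.ofReal_one]

lemma energy_congr_ae {ρ σ : ℝ → ℝ} (h : ρ =ᵐ[volume.restrict (Ioi 0)] σ) :
    energy ρ = energy σ := by
  have integrand_congr (F : ℝ → ℝ → ℝ≥0∞) :
      ∫⁻ x in Ioi 0, F x (ρ x) = ∫⁻ x in Ioi 0, F x (σ x) :=
    lintegral_congr_ae (h.mono fun x hx => congrArg (F x) hx)
  rw [energy, energy, integrand_congr fun _ r => ENNReal.ofReal (r ^ 2),
    integrand_congr fun x r => ENNReal.ofReal (x * r)]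

lemma ae_eq_of_lintegral_ofReal_sq_sub_eq_zero {α : Type*} [MeasurableSpace α] {μ : Measure α}
    {f g : α → ℝ} (hf : AEMeasurable f μ) (hg : AEMeasurable g μ)
    (h : ∫⁻ x, ENNReal.ofReal ((f x - g x) ^ 2) ∂μ = 0) : f =ᵐ[μ] g := by
  filter_upwards [(lintegral_eq_zero_iff' (by fun_prop)).mp h] with x hx
  simpa [sub_eq_zero] using hx

theorem stmt15_general (ρ : ℝ → ℝ)
    (hnn : ∀ x ∈ Set.Ioi (0 : ℝ), 0 ≤ ρ x)
    (hmass : (∫ x in Set.Ioi (0 : ℝ), ρ x) = 1) :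
    (ENNReal.ofReal (1 / (6 * Real.pi)) *
        (∫⁻ x in Set.Ioi (0 : ℝ), ENNReal.ofReal (rhoStar x ^ 2)) +
        ∫⁻ x in Set.Ioi (0 : ℝ), ENNReal.ofReal (x * rhoStar x))
      ≤ ENNReal.ofReal (1 / (6 * Real.pi)) *
        (∫⁻ x in Set.Ioi (0 : ℝ), ENNReal.ofReal (ρ x ^ 2)) +
        ∫⁻ x in Set.Ioi (0 : ℝ), ENNReal.ofReal (x * ρ x) ∧
    ((ENNReal.ofReal (1 / (6 * Real.pi)) *
        (∫⁻ x in Set.Ioi (0 : ℝ), ENNReal.ofReal (rhoStar x ^ 2)) +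
        ∫⁻ x in Set.Ioi (0 : ℝ), ENNReal.ofReal (x * rhoStar x))
      = ENNReal.ofReal (1 / (6 * Real.pi)) *
        (∫⁻ x in Set.Ioi (0 : ℝ), ENNReal.ofReal (ρ x ^ 2)) +
        ∫⁻ x in Set.Ioi (0 : ℝ), ENNReal.ofReal (x * ρ x)
      ↔ ρ =ᵐ[volume.restrict (Set.Ioi 0)] rhoStar) := by
  change energy rhoStar ≤ energy ρ ∧ (energy rhoStar = energy ρ ↔ _)
  have hρ : IntegrableOn ρ (Ioi 0) := by
    by_contra h
    rw [integral_undef h] at hmass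
    exact zero_ne_one hmass
  have hmass' : ∫⁻ x in Ioi 0, ENNReal.ofReal (ρ x) = 1 := by
    rw [← ofReal_integral_eq_lintegral_ofReal hρ
      ((ae_restrict_iff' measurableSet_Ioi).mpr (ae_of_all _ hnn)), hmass, ENNReal.ofReal_one]
  have hgap := energy_add_le hρ.aemeasurable hnn
  rw [hmass', lintegral_ofReal_rhoStar, mul_one,
    ENNReal.add_le_add_iff_right ENNReal.ofReal_ne_top] at hgap
  refine ⟨le_self_add.trans hgap, fun heq => ?_, fun h => (energy_congr_ae h).symm⟩
  have hdist : ENNReal.ofReal (1 / (6 * π)) *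
      (∫⁻ x in Ioi 0, ENNReal.ofReal ((ρ x - rhoStar x) ^ 2)) = 0 := by
    refine nonpos_iff_eq_zero.mp ((ENNReal.add_le_add_iff_left energy_rhoStar_ne_top).mp ?_)
    exact hgap.trans_eq (by rw [add_zero, heq])
  exact ae_eq_of_lintegral_ofReal_sq_sub_eq_zero hρ.aemeasurable
    continuous_rhoStar.aemeasurable
    ((mul_eq_zero.mp hdist).resolve_left (ENNReal.ofReal_pos.mpr (by positivity)).ne')

/-- (Intermediate-regime minimizer.) Among all measurable, nonnegative, square-integrable
densities `ρ` on `(0,∞)` of unit mass, the energy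
`E⁽³⁾(ρ) = (1/(6π))·∫₀^∞ ρ² + ∫₀^∞ x·ρ(x) dx` (computed in `[0,∞]`, so that a divergent
transport term counts as `+∞`) is minimized by `ρ*`, uniquely up to null sets. In
particular the equilibrium density in the intermediate regime is linear on its support. -/
theorem stmt15 (ρ : ℝ → ℝ) (hmeas : Measurable ρ)
    (hnn : ∀ x ∈ Set.Ioi (0 : ℝ), 0 ≤ ρ x)
    (hL2 : IntegrableOn (fun x => ρ x ^ 2) (Set.Ioi 0))
    (hmass : (∫ x in Set.Ioi (0 : ℝ), ρ x) = 1) :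
    (ENNReal.ofReal (1 / (6 * Real.pi)) *
        (∫⁻ x in Set.Ioi (0 : ℝ), ENNReal.ofReal (rhoStar x ^ 2)) +
        ∫⁻ x in Set.Ioi (0 : ℝ), ENNReal.ofReal (x * rhoStar x))
      ≤ ENNReal.ofReal (1 / (6 * Real.pi)) *
        (∫⁻ x in Set.Ioi (0 : ℝ), ENNReal.ofReal (ρ x ^ 2)) +
        ∫⁻ x in Set.Ioi (0 : ℝ), ENNReal.ofReal (x * ρ x) ∧
    ((ENNReal.ofReal (1 / (6 * Real.pi)) *
        (∫⁻ x in Set.Ioi (0 : ℝ), ENNReal.ofReal (rhoStar x ^ 2)) +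
        ∫⁻ x in Set.Ioi (0 : ℝ), ENNReal.ofReal (x * rhoStar x))
      = ENNReal.ofReal (1 / (6 * Real.pi)) *
        (∫⁻ x in Set.Ioi (0 : ℝ), ENNReal.ofReal (ρ x ^ 2)) +
        ∫⁻ x in Set.Ioi (0 : ℝ), ENNReal.ofReal (x * ρ x)
      ↔ ρ =ᵐ[volume.restrict (Set.Ioi 0)] rhoStar) :=
  stmt15_general ρ hnn hmass
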